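/- Let μ be a finite Borel measure on ℝⁿ with 0 < μ(B_r(x)) < ∞, let X = ⨍_{B_r(x)} y dμ(y) be the μ-center of mass of B_r(x), and consider the nonnegative bilinear form Q(v,w) = ⨍_{B_r(x)} (v·(y−X))(w·(y−X)) dμ(y) with orthonormal eigenbasis v₁,…,v_n and eigenvalues λ₁ ≥ … ≥ λ_n ≥ 0. Then for every z ∈ ℝⁿ, every a ∈ ℝ, every w ∈ ℝⁿ, and every i, one has λ_i (v_i·w)² ≤ ⨍_{B_r(x)} |a − (z−y)·w|² dμ(y). (Applied in the paper with a = u(z) and w = Du(z) for u differentiable at z.) -/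

import Mathlib

open MeasureTheory Metric Set
open scoped ENNReal NNReal RealInnerProductSpace

noncomputable section

/-- `ℝⁿ` as a Euclidean space. -/
abbrev Rn (n : ℕ) : Type := EuclideanSpace ℝ (Fin n)

/-- The Alt–Caffarelli energy `∫_D |Du|² + Q² 1_{u>0}`. -/
def acEnergy {n : ℕ} (Q u : Rn n → ℝ) (D : Set (Rn n)) : ℝ :=
  ∫ x in D, (‖fderiv ℝ u x‖ ^ 2 + Q x ^ 2 * Set.indicator {y | 0 < u y} (fun _ => (1 : ℝ)) x)

/-- `u` solves the one-phase Alt–Caffarelli problem `(⋆_{Ω,Q})`: `u ≥ 0` on `Ω` and `u`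
minimizes the Alt–Caffarelli energy on every compactly contained subdomain, among
competitors agreeing with `u` off the subdomain (i.e. `u - v ∈ W^{1,2}_0(D)`). -/
structure ACSolution {n : ℕ} (Ω : Set (Rn n)) (Q u : Rn n → ℝ) : Prop where
  nonneg : ∀ x ∈ Ω, 0 ≤ u x
  locallyMinimizing : ∀ D : Set (Rn n), IsCompact (closure D) → closure D ⊆ Ω →
    ∀ v : Rn n → ℝ, (∀ x ∈ Ω \ D, v x = u x) → acEnergy Q u D ≤ acEnergy Q v D

/-- The free boundary `∂{u > 0}`. -/
def freeBoundary {n : ℕ} (u : Rn n → ℝ) : Set (Rn n) := frontier {x | 0 < u x}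

/-- `u` is `1`-homogeneous about `x₀`. -/
def IsOneHomogeneousAbout {n : ℕ} (u : Rn n → ℝ) (x₀ : Rn n) : Prop :=
  ∀ r : ℝ, 0 < r → ∀ ξ : Rn n, u (x₀ + r • ξ) = r * u (x₀ + ξ)

/-- `u` is `k`-symmetric: `1`-homogeneous about some point and translation invariant
along some `k`-dimensional linear subspace. -/
def IsKSymmetric {n : ℕ} (k : ℕ) (u : Rn n → ℝ) : Prop :=
  (∃ x₀, IsOneHomogeneousAbout u x₀) ∧
  ∃ L : Submodule ℝ (Rn n), Module.finrank ℝ L = k ∧ ∀ (x : Rn n), ∀ v ∈ L, u (x + v) = u x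

/-- `u` is `(k,ε)`-symmetric in `B_s(x)`. -/
def IsSymmetricIn {n : ℕ} (k : ℕ) (ε : ℝ) (u : Rn n → ℝ) (x : Rn n) (s : ℝ) : Prop :=
  ∃ v : Rn n → ℝ, IsKSymmetric k v ∧
    s ^ (2 - (n : ℝ)) * (∫ y in ball x s, (u y - v y) ^ 2) < ε

/-- The quantitative `(k,ε,r)`-stratum `S^k_{ε,r}(u)`. -/
def quantStratum {n : ℕ} (Ω : Set (Rn n)) (u : Rn n → ℝ) (k : ℕ) (ε r : ℝ) : Set (Rn n) :=
  {x ∈ freeBoundary u ∩ Ω |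
    ∀ s : ℝ, r ≤ s → s ≤ min 1 (infDist x Ωᶜ) → ¬ IsSymmetricIn (k + 1) ε u x s}

/-- The `(k,ε)`-stratum `S^k_ε(u)`. -/
def epsStratum {n : ℕ} (Ω : Set (Rn n)) (u : Rn n → ℝ) (k : ℕ) (ε : ℝ) : Set (Rn n) :=
  {x ∈ freeBoundary u ∩ Ω |
    ∀ s : ℝ, 0 < s → s ≤ min 1 (infDist x Ωᶜ) → ¬ IsSymmetricIn (k + 1) ε u x s}

/-- Bound `[Q]_{α,A} ≤ M` on the `α`-Hölder seminorm of `Q` on `A`. -/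
def HolderSemiNormLE {n : ℕ} (α : ℝ) (Q : Rn n → ℝ) (A : Set (Rn n)) (M : ℝ) : Prop :=
  ∀ x ∈ A, ∀ y ∈ A, |Q x - Q y| ≤ M * dist x y ^ α

/-- `Q` is positive with `|Q + 1/Q|_{C⁰(A)} ≤ Λ`. -/
def QBounds {n : ℕ} (Q : Rn n → ℝ) (A : Set (Rn n)) (Λ : ℝ) : Prop :=
  ∀ x ∈ A, 0 < Q x ∧ Q x + (Q x)⁻¹ ≤ Λ

/-- The Weiss density `W_r(Q,u,y)`. -/
def weissDensity {n : ℕ} (Q u : Rn n → ℝ) (y : Rn n) (r : ℝ) : ℝ :=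
  r ^ (-(n : ℝ)) * (∫ x in ball y r, ‖fderiv ℝ u x‖ ^ 2) +
    Q y ^ 2 * r ^ (-(n : ℝ)) * (volume ({x | 0 < u x} ∩ ball y r)).toReal -
    r ^ (-(n : ℝ) - 1) * ∫ x in sphere y r, u x ^ 2 ∂μH[(n : ℝ) - 1]

/-- The trivial (half-plane / "linear") one-homogeneous solutions `x ↦ max (x·e) 0`. -/
def IsHalfPlaneSolution {m : ℕ} (u : Rn m → ℝ) : Prop :=
  ∃ e : Rn m, ∀ x, u x = max (⟪x, e⟫) 0

/-- `k*`: the smallest dimension admitting a non-linear one-homogeneous solution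
of `(⋆_{ℝ^{k*},1})`. -/
def kstar : ℕ :=
  sInf {m : ℕ | ∃ u : Rn m → ℝ, ACSolution Set.univ (fun _ => 1) u ∧
    IsOneHomogeneousAbout u 0 ∧ ¬ IsHalfPlaneSolution u}

/-- `x` is a regular point of the free boundary: near `x`, `∂{u>0}` is a `C^{1,β}`
graph over a hyperplane, for some `β > 0`. -/
def IsRegularPoint {n : ℕ} (u : Rn n → ℝ) (x : Rn n) : Prop :=
  ∃ r : ℝ, 0 < r ∧ ∃ β : ℝ, 0 < β ∧
    ∃ (e : Rn n ≃L[ℝ] (EuclideanSpace ℝ (Fin (n - 1)) × ℝ))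
      (f : EuclideanSpace ℝ (Fin (n - 1)) → ℝ) (C : ℝ),
      ContDiff ℝ 1 f ∧
      (∀ a b, ‖fderiv ℝ f a - fderiv ℝ f b‖ ≤ C * dist a b ^ β) ∧
      freeBoundary u ∩ ball x r = (e ⁻¹' {p | p.2 = f p.1}) ∩ ball x r

/-- The singular set: non-regular points of the free boundary in `Ω`. -/
def singularSet {n : ℕ} (Ω : Set (Rn n)) (u : Rn n → ℝ) : Set (Rn n) :=
  (freeBoundary u ∩ Ω) \ {x | IsRegularPoint u x}

/-- `S` is `k`-rectifiable: `ℋ^k`-almost all of `S` is covered by countably many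
`C¹` images of `ℝ^k`. -/
def KRectifiable {n : ℕ} (k : ℕ) (S : Set (Rn n)) : Prop :=
  ∃ f : ℕ → (EuclideanSpace ℝ (Fin k) → Rn n),
    (∀ i, ContDiff ℝ 1 (f i)) ∧ μH[(k : ℝ)] (S \ ⋃ i, Set.range (f i)) = 0

/-- The squared Jones `β`-number `β^k_{μ,2}(x,r)²`. -/
def jonesBetaSq {n : ℕ} (k : ℕ) (μ : Measure (Rn n)) (x : Rn n) (r : ℝ) : ℝ :=
  sInf {b : ℝ | ∃ V : AffineSubspace ℝ (Rn n), (V : Set (Rn n)).Nonempty ∧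
    Module.finrank ℝ V.direction = k ∧
    b = r ^ (-(k : ℝ) - 2) * ∫ z in ball x r, (infDist z (V : Set (Rn n))) ^ 2 ∂μ}

/-
The form `Q` is the covariance form of the normalized measure `P = μ(B_r(x))⁻¹ μ|_{B_r(x)}`.
For an eigenvector `e` with eigenvalue `λ`, positivity of `Q` at `w - ⟪e, w⟫ e` gives
`λ ⟪e, w⟫² ≤ Q(w, w) = Var_P ⟪w, ·⟫`, and the variance of `y ↦ a - ⟪z - y, w⟫`, which differs
from `⟪w, ·⟫` by a constant, is at most its second moment.
-/

open ProbabilityTheory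

theorem LinearMap.BilinForm.IsPosSemidef.eigenvalue_mul_inner_sq_le {E : Type*}
    [NormedAddCommGroup E] [InnerProductSpace ℝ E] {B : LinearMap.BilinForm ℝ E}
    (hB : B.IsPosSemidef) {e : E} (he : ‖e‖ = 1) {c : ℝ} (heig : ∀ w, B e w = c * ⟪e, w⟫)
    (w : E) : c * ⟪e, w⟫ ^ 2 ≤ B w w := by
  have hnonneg := hB.isNonneg.nonneg (w - ⟪e, w⟫ • e)
  simp only [map_sub, map_smul, LinearMap.sub_apply, LinearMap.smul_apply, smul_eq_mul,
    hB.isSymm.eq w e, heig] at hnonneg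
  rw [real_inner_self_eq_norm_sq, he] at hnonneg
  linear_combination hnonneg

theorem ProbabilityTheory.integral_cond {Ω F : Type*} [MeasurableSpace Ω] [NormedAddCommGroup F]
    [NormedSpace ℝ F] (μ : Measure Ω) (s : Set Ω) (f : Ω → F) :
    ∫ y, f y ∂μ[|s] = (μ s).toReal⁻¹ • ∫ y in s, f y ∂μ := by
  rw [cond, integral_smul_measure, ENNReal.toReal_inv]

theorem ProbabilityTheory.memLp_id_cond_of_isBounded {F : Type*} [NormedAddCommGroup F]
    [MeasurableSpace F] [BorelSpace F] [SecondCountableTopology F] (μ : Measure F) {s : Set F}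
    (hs : MeasurableSet s) (hbdd : Bornology.IsBounded s) (p : ℝ≥0∞) : MemLp id p μ[|s] := by
  obtain ⟨C, hC⟩ := hbdd.exists_norm_le
  exact MemLp.of_bound aestronglyMeasurable_id C (ae_cond_of_forall_mem hs hC)

theorem eigenvalue_moment_estimate_general
    (n : ℕ) (μ : Measure (Rn n)) [IsFiniteMeasure μ] (x : Rn n) (r : ℝ)
    (hpos : 0 < μ (ball x r)) (X : Rn n)
    (hX : X = (μ (ball x r)).toReal⁻¹ • ∫ y in ball x r, y ∂μ)
    (v : Fin n → Rn n) (hv : Orthonormal ℝ v) (lam : Fin n → ℝ)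
    (heig : ∀ (i : Fin n) (w : Rn n),
      (μ (ball x r)).toReal⁻¹ * ∫ y in ball x r, ⟪v i, y - X⟫ * ⟪w, y - X⟫ ∂μ
        = lam i * ⟪v i, w⟫) :
    ∀ (z : Rn n) (a : ℝ) (w : Rn n) (i : Fin n),
      lam i * ⟪v i, w⟫ ^ 2 ≤
        (μ (ball x r)).toReal⁻¹ * ∫ y in ball x r, (a - ⟪z - y, w⟫) ^ 2 ∂μ := by
  intro z a w i
  set P := μ[|ball x r]
  have : IsProbabilityMeasure P := cond_isProbabilityMeasure hpos.ne'
  have hmem : MemLp id 2 P := memLp_id_cond_of_isBounded μ measurableSet_ball isBounded_ball 2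
  have hmean : P[id] = X := by rw [hX, integral_cond]; rfl
  have hcov (u : Rn n) : (covarianceBilin P).toBilinForm (v i) u = lam i * ⟪v i, u⟫ := by
    rw [ContinuousLinearMap.toBilinForm_apply, covarianceBilin_apply hmem, hmean, integral_cond,
      smul_eq_mul, heig]
  have hshift : (fun y ↦ a - ⟪z - y, w⟫) = fun y ↦ (a - ⟪z, w⟫) + ⟪w, y⟫ := by
    ext y; rw [inner_sub_left, real_inner_comm w y]; ring
  calc lam i * ⟪v i, w⟫ ^ 2
      ≤ covarianceBilin P w w :=
        isPosSemidef_covarianceBilin.eigenvalue_mul_inner_sq_le (hv.1 i) hcov w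
    _ = Var[fun y ↦ a - ⟪z - y, w⟫; P] := by
        rw [covarianceBilin_self hmem, hshift, variance_const_add (by fun_prop)]
    _ ≤ P[(fun y ↦ a - ⟪z - y, w⟫) ^ 2] := variance_le_expectation_sq (by fun_prop)
    _ = _ := by rw [integral_cond, smul_eq_mul]; rfl

/-- eigenvalue estimate in the proof of Theorem 5.1: for the second
moment form of `μ` on `B_r(x)` centered at the `μ`-center of mass, each eigenvalue is
controlled by the mean square of `a - (z-y)·w`. -/
theorem eigenvalue_moment_estimate
    (n : ℕ) (μ : Measure (Rn n)) [IsFiniteMeasure μ] (x : Rn n) (r : ℝ)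
    (hpos : 0 < μ (ball x r)) (X : Rn n)
    (hX : X = (μ (ball x r)).toReal⁻¹ • ∫ y in ball x r, y ∂μ)
    (v : Fin n → Rn n) (hv : Orthonormal ℝ v) (lam : Fin n → ℝ)
    (hmono : ∀ i j : Fin n, i ≤ j → lam j ≤ lam i) (hnn : ∀ i, 0 ≤ lam i)
    (heig : ∀ (i : Fin n) (w : Rn n),
      (μ (ball x r)).toReal⁻¹ * ∫ y in ball x r, ⟪v i, y - X⟫ * ⟪w, y - X⟫ ∂μ
        = lam i * ⟪v i, w⟫) :
    ∀ (z : Rn n) (a : ℝ) (w : Rn n) (i : Fin n),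
      lam i * ⟪v i, w⟫ ^ 2 ≤
        (μ (ball x r)).toReal⁻¹ * ∫ y in ball x r, (a - ⟪z - y, w⟫) ^ 2 ∂μ :=
  eigenvalue_moment_estimate_general n μ x r hpos X hX v hv lam heig
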